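/- arXiv:2103.09397 — 9 statements merged into one kernel-verified Lean document; each statement's English description precedes it below -/
import Mathlib

section
/- Let Q ⊆ ℂⁿ be an open complete circular domain containing 0. Let f be holomorphic on Q with f(0) = 0 and |f(z)| < 1 for all z ∈ Q, and suppose f(z) = Σ_{k=1}^∞ P_k(z) on Q, where each P_k is a homogeneous polynomial map of degree k. Then for every w ∈ Q, Σ_{k=1}^∞ |P_k((1/√2)•w)| ≤ 1. -/
/-!
When the coefficients are absolutely summable, `ξ ↦ Σ c_k ξ^k` on the unit circle is a continuous
function whose Fourier coefficients are the `c_k`, so Bessel's inequality bounds `Σ |c_k|²` by the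
square of its sup norm. For a power series bounded by `1` on the open disc, apply this at radius
`r < 1` and let `r → 1`. For `ξ ↦ f(ξ • w) = Σ_{k ≥ 1} P_k(w) ξ^k` this gives `Σ |P_k(w)|² ≤ 1`,
and Cauchy–Schwarz against the weights `2^{-k/2}`, whose squares sum to `1`, gives the bound.
-/

open AddCircle MeasureTheory Filter Topology

theorem sum_sq_norm_le_of_norm_tsum_le_on_circle {c : ℕ → ℂ} (hc : Summable fun k => ‖c k‖)
    {M : ℝ} (hM : ∀ ξ : ℂ, ‖ξ‖ = 1 → ‖∑' k, c k * ξ ^ k‖ ≤ M) (s : Finset ℕ) :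
    ∑ k ∈ s, ‖c k‖ ^ 2 ≤ M ^ 2 := by
  have hM0 : 0 ≤ M := (norm_nonneg _).trans (hM 1 (by simp))
  set g : ℕ → C(AddCircle (1 : ℝ), ℂ) := fun k => c k • fourier k
  have hg : Summable g := by
    refine .of_norm (hc.congr fun k => ?_)
    simp [g, norm_smul, fourier_norm]
  have hG : ∀ t, ‖(∑' k, g k) t‖ ≤ M := fun t => by
    simpa [← ContinuousMap.tsum_apply hg, g, toCircle_nsmul] using
      hM (toCircle t) (Circle.norm_coe _)
  set x := ContinuousMap.toLp 2 haarAddCircle ℂ (∑' k, g k)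
  have hxM : ‖x‖ ≤ M := by
    have hae := (ContinuousMap.coeFn_toLp (p := 2) (𝕜 := ℂ) haarAddCircle (∑' k, g k)).mono
      fun t ht => ht ▸ hG t
    simpa [measureUnivNNReal, x] using Lp.norm_le_of_ae_bound hM0 hae
  have hx : HasSum (fun k : ℕ => c k • fourierLp 2 (k : ℤ)) x := by
    simpa [g, Function.comp_def] using
      hg.hasSum.map (ContinuousMap.toLp 2 haarAddCircle ℂ) (ContinuousMap.toLp _ _ _).continuous
  have hon : Orthonormal ℂ fun k : ℕ => fourierLp (T := 1) 2 (k : ℤ) :=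
    orthonormal_fourier.comp _ Nat.cast_injective
  have hcoeff : ∀ j : ℕ, inner ℂ (fourierLp (T := 1) 2 (j : ℤ)) x = c j := by
    intro j
    have hinner :=
      hx.map (innerSL ℂ (fourierLp (T := 1) 2 (j : ℤ))) (ContinuousLinearMap.continuous _)
    refine hinner.tsum_eq.symm.trans ?_
    simp [inner_smul_right, orthonormal_iff_ite.1 hon]
  calc ∑ k ∈ s, ‖c k‖ ^ 2 = ∑ k ∈ s, ‖inner ℂ (fourierLp (T := 1) 2 (k : ℤ)) x‖ ^ 2 := by
        simp only [hcoeff]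
    _ ≤ ‖x‖ ^ 2 := hon.sum_inner_products_le x
    _ ≤ M ^ 2 := by gcongr

theorem summable_sq_norm_and_tsum_le_of_norm_tsum_le_on_ball {c : ℕ → ℂ}
    (hc : BddAbove (Set.range fun k => ‖c k‖)) {M : ℝ}
    (hM : ∀ ξ : ℂ, ‖ξ‖ < 1 → ‖∑' k, c k * ξ ^ k‖ ≤ M) :
    Summable (fun k => ‖c k‖ ^ 2) ∧ ∑' k, ‖c k‖ ^ 2 ≤ M ^ 2 := by
  obtain ⟨C, hC⟩ := hc
  have hdisk : ∀ r ∈ Set.Ioo (0 : ℝ) 1, ∀ N,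
      ∑ k ∈ Finset.range N, ‖c k‖ ^ 2 * r ^ (2 * k) ≤ M ^ 2 := by
    rintro r ⟨hr0, hr1⟩ N
    have hsum : Summable fun k => ‖c k * (r : ℂ) ^ k‖ := by
      refine .of_nonneg_of_le (fun _ => norm_nonneg _) (fun k => ?_)
        ((summable_geometric_of_lt_one hr0.le hr1).mul_left C)
      rw [norm_mul, norm_pow, Complex.norm_real, Real.norm_of_nonneg hr0.le]
      exact mul_le_mul_of_nonneg_right (hC ⟨k, rfl⟩) (by positivity)
    convert sum_sq_norm_le_of_norm_tsum_le_on_circle hsum (fun ξ hξ => ?_) (Finset.range N)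
      using 2 with k
    · rw [norm_mul, norm_pow, Complex.norm_real, Real.norm_of_nonneg hr0.le]; ring
    · simpa [mul_assoc, ← mul_pow] using hM (r * ξ) (by simpa [hξ, abs_of_pos hr0])
  have hN : ∀ N, ∑ k ∈ Finset.range N, ‖c k‖ ^ 2 ≤ M ^ 2 := by
    intro N
    have hlim : Tendsto (fun r : ℝ => ∑ k ∈ Finset.range N, ‖c k‖ ^ 2 * r ^ (2 * k)) (𝓝[<] 1)
        (𝓝 (∑ k ∈ Finset.range N, ‖c k‖ ^ 2)) := by
      have hcont : Continuous fun r : ℝ => ∑ k ∈ Finset.range N, ‖c k‖ ^ 2 * r ^ (2 * k) := by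
        fun_prop
      simpa using (hcont.tendsto 1).mono_left nhdsWithin_le_nhds
    exact le_of_tendsto hlim
      (eventually_of_mem (Ioo_mem_nhdsLT zero_lt_one) fun r hr => hdisk r hr N)
  have hnn : ∀ k, 0 ≤ ‖c k‖ ^ 2 := fun k => by positivity
  exact ⟨summable_of_sum_range_le hnn hN, Real.tsum_le_of_sum_range_le hnn hN⟩

theorem summable_and_tsum_mul_inv_sqrt_two_pow_succ_le {a : ℕ → ℝ} (ha : ∀ k, 0 ≤ a k)
    (hsq : Summable fun k => a k ^ 2) :
    Summable (fun k => a k * (√2)⁻¹ ^ (k + 1)) ∧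
      ∑' k, a k * (√2)⁻¹ ^ (k + 1) ≤ √(∑' k, a k ^ 2) := by
  have hw : ∀ k : ℕ, ((√2)⁻¹ ^ (k + 1)) ^ (2 : ℝ) = 1 / 2 / 2 ^ k := fun k => by
    rw [Real.rpow_two, ← pow_mul, mul_comm, pow_mul, inv_pow, Real.sq_sqrt zero_le_two, pow_succ,
      one_div, inv_pow]
    ring
  have hpq : (2 : ℝ).HolderConjugate 2 := .two_two
  have hsq' : Summable fun k => a k ^ (2 : ℝ) := by simpa [Real.rpow_two] using hsq
  have hw_sum : Summable fun k : ℕ => ((√2)⁻¹ ^ (k + 1)) ^ (2 : ℝ) := by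
    simpa only [hw] using summable_geometric_two' 1
  refine ⟨Real.summable_mul_of_Lp_Lq_of_nonneg hpq ha (fun k => by positivity) hsq' hw_sum, ?_⟩
  have hholder := Real.inner_le_Lp_mul_Lq_tsum_of_nonneg hpq ha (fun k => by positivity) hsq' hw_sum
  simp_rw [hw, tsum_geometric_two' 1, Real.rpow_two] at hholder
  simpa [Real.sqrt_eq_rpow] using hholder

theorem stmt_1_general (n : ℕ) (Q : Set (Fin n → ℂ))
    (hcirc : ∀ z ∈ Q, ∀ ξ : ℂ, ‖ξ‖ ≤ 1 → ξ • z ∈ Q)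
    (f : (Fin n → ℂ) → ℂ)
    (hb : ∀ z ∈ Q, ‖f z‖ < 1)
    (P : ℕ → (Fin n → ℂ) → ℂ)
    (hhom : ∀ (k : ℕ) (ξ : ℂ) (z : Fin n → ℂ), P k (ξ • z) = ξ ^ k * P k z)
    (hsum : ∀ z ∈ Q, HasSum (fun k : ℕ => P (k + 1) z) (f z))
    (w : Fin n → ℂ) (hw : w ∈ Q) :
    Summable (fun k : ℕ => ‖P (k + 1) ((((Real.sqrt 2)⁻¹ : ℝ) : ℂ) • w)‖) ∧
    ∑' k : ℕ, ‖P (k + 1) ((((Real.sqrt 2)⁻¹ : ℝ) : ℂ) • w)‖ ≤ 1 := by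
  set c : ℕ → ℂ := fun k => if k = 0 then 0 else P k w
  have hser : ∀ ξ : ℂ, ‖ξ‖ ≤ 1 → HasSum (fun k => c k * ξ ^ k) (f (ξ • w)) := by
    intro ξ hξ
    refine (hasSum_nat_add_iff' 1).1 ?_
    simpa [c, hhom, mul_comm] using hsum _ (hcirc w hw ξ hξ)
  have hbdd : BddAbove (Set.range fun k => ‖c k‖) := by
    simpa using (hser 1 norm_one.le).summable.tendsto_atTop_zero.norm.bddAbove_range
  obtain ⟨hsq, hsq_le⟩ := summable_sq_norm_and_tsum_le_of_norm_tsum_le_on_ball hbdd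
    (M := 1) fun ξ hξ => (hser ξ hξ.le).tsum_eq ▸ (hb _ (hcirc w hw ξ hξ.le)).le
  have hnorm : ∀ k, ‖P (k + 1) ((((√2)⁻¹ : ℝ) : ℂ) • w)‖ = ‖c (k + 1)‖ * (√2)⁻¹ ^ (k + 1) :=
    fun k => by simp [c, hhom, mul_comm]
  simp_rw [hnorm]
  obtain ⟨hsummable, hle⟩ := summable_and_tsum_mul_inv_sqrt_two_pow_succ_le
    (fun k => norm_nonneg (c (k + 1))) ((summable_nat_add_iff 1).2 hsq)
  refine ⟨hsummable, hle.trans (Real.sqrt_le_one.2 ?_)⟩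
  simpa [hsq.tsum_eq_zero_add, c] using hsq_le

/-- Multidimensional Bombieri inequality (Theorem 2 of Liu–Ponnusamy):
if `Q ⊆ ℂⁿ` is an open complete circular domain containing `0`, `f` is holomorphic
on `Q` with `f(0) = 0` and `|f| < 1` on `Q`, expanded as `f = Σ_{k≥1} P_k` with `P_k`
homogeneous of degree `k`, then `Σ_{k≥1} |P_k((1/√2)•w)| ≤ 1` for every `w ∈ Q`. -/
theorem stmt_1 (n : ℕ) (Q : Set (Fin n → ℂ)) (hQopen : IsOpen Q)
    (h0Q : (0 : Fin n → ℂ) ∈ Q)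
    (hcirc : ∀ z ∈ Q, ∀ ξ : ℂ, ‖ξ‖ ≤ 1 → ξ • z ∈ Q)
    (f : (Fin n → ℂ) → ℂ) (hf : DifferentiableOn ℂ f Q)
    (hf0 : f 0 = 0)
    (hb : ∀ z ∈ Q, ‖f z‖ < 1)
    (P : ℕ → (Fin n → ℂ) → ℂ)
    (hhom : ∀ (k : ℕ) (ξ : ℂ) (z : Fin n → ℂ), P k (ξ • z) = ξ ^ k * P k z)
    (hsum : ∀ z ∈ Q, HasSum (fun k : ℕ => P (k + 1) z) (f z))
    (w : Fin n → ℂ) (hw : w ∈ Q) :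
    Summable (fun k : ℕ => ‖P (k + 1) ((((Real.sqrt 2)⁻¹ : ℝ) : ℂ) • w)‖) ∧
    ∑' k : ℕ, ‖P (k + 1) ((((Real.sqrt 2)⁻¹ : ℝ) : ℂ) • w)‖ ≤ 1 :=
  stmt_1_general n Q hcirc f hb P hhom hsum w hw
end

section
/- Let a = 1/√2 and consider the function f₀(z₁,z₂) = z₁(a − z₂)/(1 − a z₂) = a z₁ − (1 − a²) Σ_{k=1}^∞ a^{k−1} z₁ z₂^k, which is holomorphic on the unit bidisk 𝔻² with |f₀| < 1 there. For every (z₁,z₂) ∈ 𝔻² with |z₁| + |z₂| > √2, the majorant series of f₀ satisfies a|z₁| + (1 − a²)|z₁| Σ_{k=1}^∞ a^{k−1} |z₂|^k = |z₁|/(√2 − |z₂|) > 1. (Consequently K₂⁰ ≤ 1/√2.) -/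
/-!
`f₀` is `z₁` times the disc automorphism `w ↦ (a - w) / (1 - a w)`, which maps the unit disc into
itself because `|1 - ā w|² - |a - w|² = (1 - |a|²)(1 - |w|²)`. The majorant series is geometric in
`a |z₂|`, and since `a² = 1/2` it sums to `|z₁| / (√2 - |z₂|)`, which exceeds `1` exactly when
`|z₁| + |z₂| > √2`.
-/

open ComplexConjugate

theorem Complex.normSq_one_sub_conj_mul_sub_normSq_sub (a w : ℂ) :
    Complex.normSq (1 - conj a * w) - Complex.normSq (a - w) =
      (1 - Complex.normSq a) * (1 - Complex.normSq w) := by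
  simp only [Complex.normSq_sub, map_one, map_mul, Complex.normSq_conj, Complex.conj_conj, one_mul]
  ring

theorem Complex.norm_sub_lt_norm_one_sub_conj_mul {a w : ℂ} (ha : ‖a‖ < 1) (hw : ‖w‖ < 1) :
    ‖a - w‖ < ‖1 - conj a * w‖ := by
  have key := Complex.normSq_one_sub_conj_mul_sub_normSq_sub a w
  simp only [Complex.normSq_eq_norm_sq] at key
  have hpos : 0 < (1 - ‖a‖ ^ 2) * (1 - ‖w‖ ^ 2) := by
    apply mul_pos <;> nlinarith [norm_nonneg a, norm_nonneg w]
  exact (pow_lt_pow_iff_left₀ (norm_nonneg _) (norm_nonneg _) two_ne_zero).mp (by linarith)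

theorem one_sub_mul_ne_zero_of_norm_le_one_of_norm_lt_one {𝕜 : Type*} [NormedDivisionRing 𝕜]
    {a w : 𝕜} (ha : ‖a‖ ≤ 1) (hw : ‖w‖ < 1) : 1 - a * w ≠ 0 := by
  rw [sub_ne_zero]
  intro h
  have : ‖a * w‖ < 1 := by
    rw [norm_mul]
    nlinarith [norm_nonneg a, norm_nonneg w]
  simp [← h] at this

theorem tsum_pow_mul_pow_succ {a r : ℝ} (h0 : 0 ≤ a * r) (h1 : a * r < 1) :
    ∑' k : ℕ, a ^ k * r ^ (k + 1) = r / (1 - a * r) := by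
  simp_rw [pow_succ, ← mul_assoc, ← mul_pow]
  rw [tsum_mul_right, tsum_geometric_of_lt_one h0 h1, div_eq_inv_mul]

theorem Real.inv_sqrt_two_sq : (√2)⁻¹ ^ 2 = (2⁻¹ : ℝ) := by
  rw [inv_pow, Real.sq_sqrt zero_le_two]

theorem inv_sqrt_two_mul_add_mul_div_eq {x r : ℝ} (hr : r < √2) :
    (√2)⁻¹ * x + (1 - (√2)⁻¹ ^ 2) * x * (r / (1 - (√2)⁻¹ * r)) = x / (√2 - r) := by
  have hs : 0 < √2 := by positivity
  have hsub : 0 < √2 - r := sub_pos.2 hr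
  have h1 : 1 - (√2)⁻¹ * r = (√2 - r) / √2 := by field_simp
  rw [Real.inv_sqrt_two_sq, h1]
  field_simp
  linear_combination (x * r) * Real.sq_sqrt zero_le_two

/-- Sharpness part of Theorem 3 of Liu–Ponnusamy: with `a = 1/√2`, the function
`f₀(z₁,z₂) = z₁(a - z₂)/(1 - a z₂)` is holomorphic on the unit bidisk with `|f₀| < 1`
there, and for every `(z₁,z₂)` in the bidisk with `|z₁| + |z₂| > √2` its majorant
series satisfies
`a|z₁| + (1-a²)|z₁| Σ_{k≥1} a^{k-1} |z₂|^k = |z₁|/(√2 - |z₂|) > 1`;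
consequently `K₂⁰ ≤ 1/√2`. -/
theorem stmt_4 (f₀ : ℂ × ℂ → ℂ)
    (hf₀ : ∀ z : ℂ × ℂ,
      f₀ z = z.1 * ((((Real.sqrt 2)⁻¹ : ℝ) : ℂ) - z.2) /
        (1 - (((Real.sqrt 2)⁻¹ : ℝ) : ℂ) * z.2)) :
    DifferentiableOn ℂ f₀ {z : ℂ × ℂ | ‖z.1‖ < 1 ∧ ‖z.2‖ < 1} ∧
    (∀ z : ℂ × ℂ, ‖z.1‖ < 1 → ‖z.2‖ < 1 → ‖f₀ z‖ < 1) ∧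
    (∀ z : ℂ × ℂ, ‖z.1‖ < 1 → ‖z.2‖ < 1 → Real.sqrt 2 < ‖z.1‖ + ‖z.2‖ →
      (Real.sqrt 2)⁻¹ * ‖z.1‖ +
          (1 - ((Real.sqrt 2)⁻¹) ^ 2) * ‖z.1‖ *
            ∑' k : ℕ, ((Real.sqrt 2)⁻¹) ^ k * ‖z.2‖ ^ (k + 1)
        = ‖z.1‖ / (Real.sqrt 2 - ‖z.2‖) ∧
      1 < ‖z.1‖ / (Real.sqrt 2 - ‖z.2‖)) := by
  have ha_pos : 0 < (√2)⁻¹ := by positivity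
  have ha_norm : ‖(((√2)⁻¹ : ℝ) : ℂ)‖ < 1 := by
    rw [Complex.norm_real, Real.norm_of_nonneg ha_pos.le]
    exact inv_lt_one_of_one_lt₀ Real.one_lt_sqrt_two
  have hden (w : ℂ) (hw : ‖w‖ < 1) : 1 - (((√2)⁻¹ : ℝ) : ℂ) * w ≠ 0 :=
    one_sub_mul_ne_zero_of_norm_le_one_of_norm_lt_one ha_norm.le hw
  refine ⟨?_, fun z hz₁ hz₂ => ?_, fun z _ hz₂ hsum => ?_⟩
  · simp_rw [funext hf₀, div_eq_mul_inv]
    fun_prop (disch := exact fun z hz => hden z.2 hz.2)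
  · have hblaschke := Complex.norm_sub_lt_norm_one_sub_conj_mul ha_norm hz₂
    rw [Complex.conj_ofReal] at hblaschke
    rw [hf₀, norm_div, norm_mul, div_lt_one (norm_pos_iff.2 (hden z.2 hz₂))]
    exact (mul_le_of_le_one_left (norm_nonneg _) hz₁.le).trans_lt hblaschke
  · have hr : ‖z.2‖ < √2 := hz₂.trans Real.one_lt_sqrt_two
    have har : (√2)⁻¹ * ‖z.2‖ < 1 := by
      rw [inv_mul_lt_iff₀ (by positivity), mul_one]
      exact hr
    rw [tsum_pow_mul_pow_succ (by positivity) har, inv_sqrt_two_mul_add_mul_div_eq hr]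
    exact ⟨rfl, by rw [one_lt_div (sub_pos.2 hr)]; linarith⟩
end

section
/- Let Q ⊆ ℂⁿ be an open complete circular domain containing 0. Let f be holomorphic on Q with |f(z)| < 1 for all z ∈ Q, and suppose f(z) = Σ_{k=0}^∞ P_k(z) on Q, where each P_k is a homogeneous polynomial map of degree k. Let p ∈ (0,2] and N ≥ 1 be an integer. Then for every w ∈ Q and every r ∈ [0,1) satisfying 2(1+r)r^N ≤ p(1−r)² (equivalently r ≤ R_{N,p}, the positive root of 2(1+r)r^N − p(1−r)² = 0), one has |f(r•w)|^p + Σ_{k=N}^∞ |P_k(r•w)| ≤ 1. -/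
/-!
Restricting `f` to the complex line through `w` gives a self-map `g ξ = f (ξ • w)` of the unit
disc with Taylor coefficients `P k w`. Wiener's inequality `|a_k| ≤ 1 - |a_0|²` (Schwarz–Pick at
the origin, applied to the average of `g` over the `k`-th roots of unity) bounds the tail by a
geometric series, and the Schwarz–Pick estimate `|g(r)| ≤ (|a_0| + r) / (1 + |a_0| r)` bounds the
first term. With `|g(r)|^p ≤ (p/2)|g(r)|² + 1 - p/2`, the condition on `r` is exactly what closes
the inequality.
-/

open Complex ComplexConjugate Metric Set

noncomputable def blaschkeFactor (a z : ℂ) : ℂ := (z - a) / (1 - conj a * z)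

section BlaschkeFactor

variable {a z : ℂ}

theorem sq_norm_one_sub_conj_mul_sub_sq_norm_sub (a z : ℂ) :
    ‖1 - conj a * z‖ ^ 2 - ‖z - a‖ ^ 2 = (1 - ‖a‖ ^ 2) * (1 - ‖z‖ ^ 2) := by
  simp only [Complex.sq_norm, normSq_apply, sub_re, sub_im, mul_re, mul_im, conj_re, conj_im,
    one_re, one_im]
  ring

theorem one_sub_conj_mul_ne_zero (ha : ‖a‖ < 1) (hz : ‖z‖ < 1) : 1 - conj a * z ≠ 0 := by
  rw [sub_ne_zero]
  refine fun h => (?_ : ‖conj a * z‖ < 1).ne ?_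
  · rw [norm_mul, RCLike.norm_conj]
    nlinarith [norm_nonneg a, norm_nonneg z]
  · rw [← h, norm_one]

theorem norm_blaschkeFactor_lt_one (ha : ‖a‖ < 1) (hz : ‖z‖ < 1) :
    ‖blaschkeFactor a z‖ < 1 := by
  have hpos : 0 < (1 - ‖a‖ ^ 2) * (1 - ‖z‖ ^ 2) := by
    apply mul_pos <;> nlinarith [norm_nonneg a, norm_nonneg z]
  rw [blaschkeFactor, norm_div, div_lt_one (norm_pos_iff.2 (one_sub_conj_mul_ne_zero ha hz))]
  refine (pow_lt_pow_iff_left₀ (norm_nonneg _) (norm_nonneg _) two_ne_zero).1 ?_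
  linarith [sq_norm_one_sub_conj_mul_sub_sq_norm_sub a z]

@[simp]
theorem blaschkeFactor_self (a : ℂ) : blaschkeFactor a a = 0 := by
  simp [blaschkeFactor]

theorem hasDerivAt_blaschkeFactor_self (ha : ‖a‖ < 1) :
    HasDerivAt (blaschkeFactor a) ((1 - ‖a‖ ^ 2 : ℝ) : ℂ)⁻¹ a := by
  have hd : 1 - conj a * a = ((1 - ‖a‖ ^ 2 : ℝ) : ℂ) := by
    rw [conj_mul']; push_cast; rfl
  have hne : ((1 - ‖a‖ ^ 2 : ℝ) : ℂ) ≠ 0 := by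
    rw [← hd]; exact one_sub_conj_mul_ne_zero ha ha
  have h := ((hasDerivAt_id' a).sub_const a).div
    (((hasDerivAt_id' a).const_mul (conj a)).const_sub 1) (hd ▸ hne)
  refine h.congr_deriv ?_
  rw [hd]
  field_simp
  ring

theorem differentiableAt_blaschkeFactor (hz : 1 - conj a * z ≠ 0) :
    DifferentiableAt ℂ (blaschkeFactor a) z :=
  ((differentiableAt_id.sub_const a).div
    ((differentiableAt_id.const_mul _).const_sub 1) hz)

theorem norm_mul_one_add_le_of_norm_blaschkeFactor_le {ρ : ℝ} (ha : ‖a‖ < 1) (hz : ‖z‖ < 1)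
    (hρ : ‖blaschkeFactor a z‖ ≤ ρ) : ‖z‖ * (1 + ‖a‖ * ρ) ≤ ‖a‖ + ρ := by
  set A := ‖a‖
  set x := ‖z‖
  have hd := norm_pos_iff.2 (one_sub_conj_mul_ne_zero ha hz)
  have hd_ge : 1 - A * x ≤ ‖1 - conj a * z‖ := by
    have := norm_sub_norm_le (1 : ℂ) (conj a * z)
    rwa [norm_one, norm_mul, RCLike.norm_conj] at this
  have hnum : ‖z - a‖ ≤ ρ * ‖1 - conj a * z‖ := by
    rwa [blaschkeFactor, norm_div, div_le_iff₀ hd] at hρ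
  have key := sq_norm_one_sub_conj_mul_sub_sq_norm_sub a z
  have hA := norm_nonneg a
  have hx := norm_nonneg z
  have hρ0 : 0 ≤ ρ := (norm_nonneg _).trans hρ
  have hAx : A * x < 1 := by nlinarith
  have h1 : (1 - ρ ^ 2) * ‖1 - conj a * z‖ ^ 2 ≤ (1 - A ^ 2) * (1 - x ^ 2) := by
    nlinarith [mul_self_le_mul_self (norm_nonneg _) hnum]
  rcases le_or_gt ρ 1 with hρ1 | hρ1
  · have h2 : (1 - ρ ^ 2) * (1 - A * x) ^ 2 ≤ (1 - A ^ 2) * (1 - x ^ 2) :=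
      (mul_le_mul_of_nonneg_left (pow_le_pow_left₀ (by linarith) hd_ge 2)
        (by nlinarith)).trans h1
    -- the difference of the two sides of `h2` is `-((1 + Aρ)x - (A + ρ))((1 - Aρ)x - (A - ρ))`
    by_contra! hlt
    nlinarith [mul_nonneg hρ0 (sub_nonneg.2 hAx.le)]
  · nlinarith [mul_le_mul_of_nonneg_left hz.le (mul_nonneg hA hρ0)]

end BlaschkeFactor

section SchwarzPick

variable {h : ℂ → ℂ} {a : ℂ}

theorem Set.MapsTo.blaschkeFactor_comp (hmaps : MapsTo h (ball 0 1) (ball 0 1)) (ha : ‖a‖ < 1) :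
    MapsTo (blaschkeFactor a ∘ h) (ball 0 1) (ball 0 1) := fun z hz => by
  simpa using norm_blaschkeFactor_lt_one ha (mem_ball_zero_iff.1 (hmaps hz))

theorem DifferentiableOn.blaschkeFactor_comp (hd : DifferentiableOn ℂ h (ball 0 1))
    (hmaps : MapsTo h (ball 0 1) (ball 0 1)) (ha : ‖a‖ < 1) :
    DifferentiableOn ℂ (blaschkeFactor a ∘ h) (ball 0 1) := fun z hz =>
  (differentiableAt_blaschkeFactor (one_sub_conj_mul_ne_zero ha
    (mem_ball_zero_iff.1 (hmaps hz)))).comp_differentiableWithinAt z (hd z hz)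

variable (hd : DifferentiableOn ℂ h (ball 0 1)) (hmaps : MapsTo h (ball 0 1) (ball 0 1))
include hd hmaps

theorem norm_deriv_le_one_sub_sq : ‖deriv h 0‖ ≤ 1 - ‖h 0‖ ^ 2 := by
  have ha : ‖h 0‖ < 1 := mem_ball_zero_iff.1 (hmaps (mem_ball_self one_pos))
  have hpos : 0 < 1 - ‖h 0‖ ^ 2 := by nlinarith [norm_nonneg (h 0)]
  have hderiv : HasDerivAt (blaschkeFactor (h 0) ∘ h)
      (((1 - ‖h 0‖ ^ 2 : ℝ) : ℂ)⁻¹ * deriv h 0) 0 :=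
    (hasDerivAt_blaschkeFactor_self ha).comp 0
      (hd.differentiableAt (ball_mem_nhds 0 one_pos)).hasDerivAt
  have hschwarz := norm_deriv_le_one_of_mapsTo_ball (hd.blaschkeFactor_comp hmaps ha)
    ((hmaps.blaschkeFactor_comp ha).mono_right
      (by simpa using ball_subset_closedBall)) one_pos
  rw [hderiv.deriv, norm_mul, norm_inv, norm_real, Real.norm_of_nonneg hpos.le,
    inv_mul_le_iff₀ hpos, mul_one] at hschwarz
  exact hschwarz

theorem norm_mul_one_add_le_add {z : ℂ} (hz : ‖z‖ < 1) :
    ‖h z‖ * (1 + ‖h 0‖ * ‖z‖) ≤ ‖h 0‖ + ‖z‖ := by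
  have ha : ‖h 0‖ < 1 := mem_ball_zero_iff.1 (hmaps (mem_ball_self one_pos))
  refine norm_mul_one_add_le_of_norm_blaschkeFactor_le ha
    (mem_ball_zero_iff.1 (hmaps (mem_ball_zero_iff.2 hz))) ?_
  exact norm_le_norm_of_mapsTo_ball (hd.blaschkeFactor_comp hmaps ha)
    ((hmaps.blaschkeFactor_comp ha).mono_right ball_subset_closedBall)
    (blaschkeFactor_self _) hz

end SchwarzPick

theorem IsPrimitiveRoot.sum_range_pow_pow {R : Type*} [CommRing R] [IsDomain R] {ζ : R} {k : ℕ}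
    (hζ : IsPrimitiveRoot ζ k) (m : ℕ) :
    ∑ j ∈ Finset.range k, (ζ ^ m) ^ j = if k ∣ m then (k : R) else 0 := by
  split_ifs with hm
  · obtain ⟨d, rfl⟩ := hm
    simp [pow_mul, hζ.pow_eq_one]
  · have hne : ζ ^ m - 1 ≠ 0 := sub_ne_zero.2 fun h => hm ((hζ.pow_eq_one_iff_dvd m).1 h)
    have h := mul_geom_sum (ζ ^ m) k
    rw [← pow_mul, mul_comm m k, pow_mul, hζ.pow_eq_one, one_pow, sub_self] at h
    exact (mul_eq_zero.1 h).resolve_left hne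

theorem Complex.eball_zero_one : eball (0 : ℂ) 1 = ball 0 1 := by
  simpa using eball_ofReal (x := (0 : ℂ)) (ε := 1)

section PowerSeries

variable {a : ℕ → ℂ} {g : ℂ → ℂ}
  (hg : ∀ ξ ∈ ball (0 : ℂ) 1, HasSum (fun m => a m * ξ ^ m) (g ξ))
include hg

theorem hasFPowerSeriesOnBall_ofScalars_of_hasSum :
    HasFPowerSeriesOnBall g (FormalMultilinearSeries.ofScalars ℂ a) 0 1 where
  r_le := ENNReal.le_of_forall_nnreal_lt fun r hr => by
    refine FormalMultilinearSeries.le_radius_of_summable _ ?_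
    have hr' : ((r : ℝ) : ℂ) ∈ ball (0 : ℂ) 1 := by simpa using hr
    simpa [FormalMultilinearSeries.ofScalars_norm] using (hg _ hr').summable.norm
  r_pos := one_pos
  hasSum {y} hy := by
    rw [eball_zero_one] at hy
    simpa [FormalMultilinearSeries.ofScalars_apply_eq, mul_comm] using hg y hy

theorem apply_zero_eq_of_hasSum : g 0 = a 0 := by
  have h := hasSum_single (f := fun m => a m * (0 : ℂ) ^ m) 0 fun m hm => by
    rw [zero_pow hm, mul_zero]
  simpa using (hg 0 (mem_ball_self one_pos)).unique h

theorem differentiableOn_of_hasSum : DifferentiableOn ℂ g (ball 0 1) :=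
  eball_zero_one ▸ (hasFPowerSeriesOnBall_ofScalars_of_hasSum hg).differentiableOn

theorem deriv_zero_eq_of_hasSum : deriv g 0 = a 1 := by
  simp [(hasFPowerSeriesOnBall_ofScalars_of_hasSum hg).hasFPowerSeriesAt.deriv]

theorem norm_coeff_one_le_of_hasSum (hmaps : MapsTo g (ball 0 1) (ball 0 1)) :
    ‖a 1‖ ≤ 1 - ‖a 0‖ ^ 2 := by
  simpa [deriv_zero_eq_of_hasSum hg, apply_zero_eq_of_hasSum hg] using
    norm_deriv_le_one_sub_sq (differentiableOn_of_hasSum hg) hmaps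

theorem hasSum_coeff_mul_pow_of_isPrimitiveRoot {k : ℕ} (hk : k ≠ 0) {ζ : ℂ}
    (hζ : IsPrimitiveRoot ζ k) {ξ : ℂ} (hξ : ξ ∈ ball (0 : ℂ) 1) :
    HasSum (fun n => a (k * n) * (ξ ^ k) ^ n)
      ((k : ℂ)⁻¹ * ∑ j ∈ Finset.range k, g (ζ ^ j * ξ)) := by
  have hrot (j : ℕ) : ζ ^ j * ξ ∈ ball (0 : ℂ) 1 := by
    simpa [hζ.norm'_eq_one hk] using hξ
  have hsum := hasSum_sum fun j (_ : j ∈ Finset.range k) => (hg _ (hrot j)).mul_left (k : ℂ)⁻¹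
  rw [← Finset.mul_sum] at hsum
  have hfilter (m : ℕ) : ∑ j ∈ Finset.range k, (k : ℂ)⁻¹ * (a m * (ζ ^ j * ξ) ^ m) =
      if k ∣ m then a m * ξ ^ m else 0 := by
    have hterm (j : ℕ) : (k : ℂ)⁻¹ * (a m * (ζ ^ j * ξ) ^ m) =
        (k : ℂ)⁻¹ * a m * ξ ^ m * (ζ ^ m) ^ j := by ring
    simp_rw [hterm]
    rw [← Finset.mul_sum, hζ.sum_range_pow_pow]
    split_ifs
    · field_simp
    · simp
  simp_rw [hfilter] at hsum
  rw [← (mul_right_injective₀ hk).hasSum_iff] at hsum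
  · simpa [Function.comp_def, pow_mul] using hsum
  · rintro m hm
    rw [if_neg]
    rintro ⟨n, rfl⟩
    exact hm ⟨n, rfl⟩

theorem norm_coeff_le_one_sub_sq_of_hasSum (hmaps : MapsTo g (ball 0 1) (ball 0 1)) {k : ℕ}
    (hk : k ≠ 0) : ‖a k‖ ≤ 1 - ‖a 0‖ ^ 2 := by
  obtain ⟨ζ, hζ⟩ : ∃ ζ : ℂ, IsPrimitiveRoot ζ k := ⟨_, Complex.isPrimitiveRoot_exp k hk⟩
  have hroot (u : ℂ) (hu : u ∈ ball (0 : ℂ) 1) : ∃ ξ ∈ ball (0 : ℂ) 1, ξ ^ k = u := by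
    obtain ⟨ξ, rfl⟩ := IsAlgClosed.exists_pow_nat_eq u (Nat.pos_of_ne_zero hk)
    refine ⟨ξ, ?_, rfl⟩
    rw [mem_ball_zero_iff, norm_pow] at hu
    exact mem_ball_zero_iff.2 ((pow_lt_one_iff_of_nonneg (norm_nonneg ξ) hk).1 hu)
  -- `u ↦ ∑ a (k n) uⁿ` is again a self-map of the disc, whose first coefficient is `a k`
  have hsub (u : ℂ) (hu : u ∈ ball (0 : ℂ) 1) :
      HasSum (fun n => a (k * n) * u ^ n) (∑' n, a (k * n) * u ^ n) := by
    obtain ⟨ξ, hξ, rfl⟩ := hroot u hu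
    exact (hasSum_coeff_mul_pow_of_isPrimitiveRoot hg hk hζ hξ).summable.hasSum
  have hsub_maps : MapsTo (fun u => ∑' n, a (k * n) * u ^ n) (ball 0 1) (ball 0 1) := by
    intro u hu
    obtain ⟨ξ, hξ, rfl⟩ := hroot u hu
    dsimp only
    rw [(hasSum_coeff_mul_pow_of_isPrimitiveRoot hg hk hζ hξ).tsum_eq, mem_ball_zero_iff,
      norm_mul, norm_inv, norm_natCast, inv_mul_lt_iff₀ (by positivity), mul_one]
    calc ‖∑ j ∈ Finset.range k, g (ζ ^ j * ξ)‖
        ≤ ∑ j ∈ Finset.range k, ‖g (ζ ^ j * ξ)‖ := norm_sum_le _ _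
      _ < ∑ _j ∈ Finset.range k, (1 : ℝ) := by
        refine Finset.sum_lt_sum_of_nonempty (Finset.nonempty_range_iff.2 hk) fun j _ => ?_
        refine mem_ball_zero_iff.1 (hmaps ?_)
        simpa [hζ.norm'_eq_one hk] using hξ
      _ = k := by simp
  simpa using norm_coeff_one_le_of_hasSum hsub hsub_maps

end PowerSeries

theorem Real.rpow_le_half_mul_sq_add {X p : ℝ} (hX : 0 ≤ X) (hp0 : 0 ≤ p) (hp2 : p ≤ 2) :
    X ^ p ≤ p / 2 * X ^ 2 + (1 - p / 2) := by
  have h := Real.geom_mean_le_arith_mean2_weighted (w₁ := p / 2) (w₂ := 1 - p / 2)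
    (p₁ := X ^ 2) (p₂ := 1) (by linarith) (by linarith) (by positivity) zero_le_one (by ring)
  have hpow : (X ^ 2) ^ (p / 2) = X ^ p := by
    rw [← Real.rpow_natCast, ← Real.rpow_mul hX]
    ring_nf
  rwa [Real.one_rpow, mul_one, mul_one, hpow] at h

theorem rpow_add_le_one_of_bohr_bounds {p r A X T : ℝ} {N : ℕ} (hp0 : 0 ≤ p) (hp2 : p ≤ 2)
    (hr0 : 0 ≤ r) (hr1 : r < 1) (hA0 : 0 ≤ A) (hA1 : A ≤ 1) (hX0 : 0 ≤ X)
    (hX : X * (1 + A * r) ≤ A + r) (hT : T * (1 - r) ≤ (1 - A ^ 2) * r ^ N)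
    (hcond : 2 * (1 + r) * r ^ N ≤ p * (1 - r) ^ 2) :
    X ^ p + T ≤ 1 := by
  have hX1 : X ^ 2 ≤ 1 := by
    have : X ≤ 1 := by
      nlinarith [mul_nonneg (sub_nonneg.2 hA1) (sub_nonneg.2 hr1.le), mul_nonneg hA0 hr0]
    nlinarith
  have hX2 : (1 - A ^ 2) * (1 - r) ≤ (1 - X ^ 2) * (1 + r) := by
    have h1 : (1 - A ^ 2) * (1 - r ^ 2) ≤ (1 - X ^ 2) * (1 + A * r) ^ 2 := by
      nlinarith [mul_self_le_mul_self (by positivity) hX]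
    have h2 : (1 - X ^ 2) * (1 + A * r) ^ 2 ≤ (1 - X ^ 2) * (1 + r) ^ 2 := by
      have : A * r ≤ r := mul_le_of_le_one_left hr0 hA1
      gcongr
    refine le_of_mul_le_mul_right ?_ (by linarith : 0 < 1 + r)
    nlinarith
  have hT2 : 2 * T ≤ p * (1 - X ^ 2) := by
    have h1r : 0 < 1 - r := by linarith
    refine le_of_mul_le_mul_right ?_ (pow_pos h1r 2)
    calc 2 * T * (1 - r) ^ 2 ≤ 2 * ((1 - A ^ 2) * (1 - r)) * r ^ N := by nlinarith
      _ ≤ 2 * ((1 - X ^ 2) * (1 + r)) * r ^ N := by gcongr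
      _ = (1 - X ^ 2) * (2 * (1 + r) * r ^ N) := by ring
      _ ≤ (1 - X ^ 2) * (p * (1 - r) ^ 2) := by gcongr
      _ = p * (1 - X ^ 2) * (1 - r) ^ 2 := by ring
  linarith [Real.rpow_le_half_mul_sq_add hX0 hp0 hp2]

theorem bohr_inequality_of_hasSum {a : ℕ → ℂ} {g : ℂ → ℂ}
    (hg : ∀ ξ ∈ ball (0 : ℂ) 1, HasSum (fun m => a m * ξ ^ m) (g ξ))
    (hmaps : MapsTo g (ball 0 1) (ball 0 1)) {p r : ℝ} {N : ℕ} (hp0 : 0 ≤ p) (hp2 : p ≤ 2)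
    (hN : 0 < N) (hr0 : 0 ≤ r) (hr1 : r < 1) (hcond : 2 * (1 + r) * r ^ N ≤ p * (1 - r) ^ 2) :
    Summable (fun k => ‖a (k + N) * (r : ℂ) ^ (k + N)‖) ∧
      ‖g r‖ ^ p + ∑' k, ‖a (k + N) * (r : ℂ) ^ (k + N)‖ ≤ 1 := by
  set A := ‖a 0‖
  have hA : A < 1 := by simpa [apply_zero_eq_of_hasSum hg] using hmaps (mem_ball_self one_pos)
  have hbound (k : ℕ) : ‖a (k + N) * (r : ℂ) ^ (k + N)‖ ≤ (1 - A ^ 2) * r ^ N * r ^ k := by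
    have hwiener := norm_coeff_le_one_sub_sq_of_hasSum hg hmaps (k := k + N) (by omega)
    rw [norm_mul, norm_pow, norm_real, Real.norm_of_nonneg hr0, pow_add]
    calc _ ≤ (1 - A ^ 2) * (r ^ k * r ^ N) := by gcongr
      _ = _ := by ring
  have hgeom := (summable_geometric_of_lt_one hr0 hr1).mul_left ((1 - A ^ 2) * r ^ N)
  have hsum := Summable.of_nonneg_of_le (fun _ => norm_nonneg _) hbound hgeom
  refine ⟨hsum, rpow_add_le_one_of_bohr_bounds hp0 hp2 hr0 hr1 (norm_nonneg _) hA.le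
    (norm_nonneg _) ?_ ?_ hcond⟩
  · have hr : ‖(r : ℂ)‖ < 1 := by rwa [norm_real, Real.norm_of_nonneg hr0]
    simpa [apply_zero_eq_of_hasSum hg, abs_of_nonneg hr0] using
      norm_mul_one_add_le_add (differentiableOn_of_hasSum hg) hmaps hr
  · calc (∑' k, ‖a (k + N) * (r : ℂ) ^ (k + N)‖) * (1 - r)
        ≤ (∑' k, (1 - A ^ 2) * r ^ N * r ^ k) * (1 - r) :=
          mul_le_mul_of_nonneg_right (hsum.tsum_le_tsum hbound hgeom) (by linarith)
      _ = (1 - A ^ 2) * r ^ N := by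
        rw [tsum_mul_left, tsum_geometric_of_lt_one hr0 hr1]
        field_simp [(by linarith : (1 - r) ≠ 0)]

theorem stmt_5_general (n : ℕ) (Q : Set (Fin n → ℂ))
    (hcirc : ∀ z ∈ Q, ∀ ξ : ℂ, ‖ξ‖ ≤ 1 → ξ • z ∈ Q)
    (f : (Fin n → ℂ) → ℂ)
    (hb : ∀ z ∈ Q, ‖f z‖ < 1)
    (P : ℕ → (Fin n → ℂ) → ℂ)
    (hhom : ∀ (k : ℕ) (ξ : ℂ) (z : Fin n → ℂ), P k (ξ • z) = ξ ^ k * P k z)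
    (hsum : ∀ z ∈ Q, HasSum (fun k : ℕ => P k z) (f z))
    (p : ℝ) (hp0 : 0 < p) (hp2 : p ≤ 2) (N : ℕ) (hN : 1 ≤ N)
    (w : Fin n → ℂ) (hw : w ∈ Q) (r : ℝ) (hr0 : 0 ≤ r) (hr1 : r < 1)
    (hcond : 2 * (1 + r) * r ^ N ≤ p * (1 - r) ^ 2) :
    Summable (fun k : ℕ => ‖P (k + N) ((r : ℂ) • w)‖) ∧
    ‖f ((r : ℂ) • w)‖ ^ p + ∑' k : ℕ, ‖P (k + N) ((r : ℂ) • w)‖ ≤ 1 := by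
  have hdisc (ξ : ℂ) (hξ : ξ ∈ ball (0 : ℂ) 1) : ξ • w ∈ Q :=
    hcirc w hw ξ (mem_ball_zero_iff.1 hξ).le
  have hslice (ξ : ℂ) (hξ : ξ ∈ ball (0 : ℂ) 1) :
      HasSum (fun m => P m w * ξ ^ m) (f (ξ • w)) := by
    simpa [hhom, mul_comm] using hsum _ (hdisc ξ hξ)
  have hmaps : MapsTo (fun ξ : ℂ => f (ξ • w)) (ball 0 1) (ball 0 1) := fun ξ hξ =>
    mem_ball_zero_iff.2 (hb _ (hdisc ξ hξ))
  simp_rw [hhom, mul_comm _ (P _ w)]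
  exact bohr_inequality_of_hasSum hslice hmaps hp0.le hp2 hN hr0 hr1 hcond

/-- Multidimensional version of the refined Bohr inequality with `|f(z)|^p`
(Theorem 4 of Liu–Ponnusamy): if `Q ⊆ ℂⁿ` is an open complete circular domain
containing `0`, `f` holomorphic on `Q` with `|f| < 1`, expanded as `f = Σ_k P_k`
with `P_k` homogeneous of degree `k`, `p ∈ (0,2]`, `N ≥ 1`, then for `w ∈ Q` and
`r ∈ [0,1)` with `2(1+r)r^N ≤ p(1-r)²` one has
`|f(r•w)|^p + Σ_{k≥N} |P_k(r•w)| ≤ 1`. -/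
theorem stmt_5 (n : ℕ) (Q : Set (Fin n → ℂ)) (hQopen : IsOpen Q)
    (h0Q : (0 : Fin n → ℂ) ∈ Q)
    (hcirc : ∀ z ∈ Q, ∀ ξ : ℂ, ‖ξ‖ ≤ 1 → ξ • z ∈ Q)
    (f : (Fin n → ℂ) → ℂ) (hf : DifferentiableOn ℂ f Q)
    (hb : ∀ z ∈ Q, ‖f z‖ < 1)
    (P : ℕ → (Fin n → ℂ) → ℂ)
    (hhom : ∀ (k : ℕ) (ξ : ℂ) (z : Fin n → ℂ), P k (ξ • z) = ξ ^ k * P k z)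
    (hP0 : ∀ z : Fin n → ℂ, P 0 z = f 0)
    (hsum : ∀ z ∈ Q, HasSum (fun k : ℕ => P k z) (f z))
    (p : ℝ) (hp0 : 0 < p) (hp2 : p ≤ 2) (N : ℕ) (hN : 1 ≤ N)
    (w : Fin n → ℂ) (hw : w ∈ Q) (r : ℝ) (hr0 : 0 ≤ r) (hr1 : r < 1)
    (hcond : 2 * (1 + r) * r ^ N ≤ p * (1 - r) ^ 2) :
    Summable (fun k : ℕ => ‖P (k + N) ((r : ℂ) • w)‖) ∧
    ‖f ((r : ℂ) • w)‖ ^ p + ∑' k : ℕ, ‖P (k + N) ((r : ℂ) • w)‖ ≤ 1 :=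
  stmt_5_general n Q hcirc f hb P hhom hsum p hp0 hp2 N hN w hw r hr0 hr1 hcond
end

section
/- For every a ∈ [0,1), the number r = 2/(3 + a + √5(1 + a)) lies in (0,1), satisfies A_{a,1}(r) = 0 where A_{a,1}(r) = [1 − (2 − a²)r](1 + a r) − (1 − r)(r + a), and is the minimum positive root of A_{a,1}; moreover inf_{a ∈ [0,1)} 2/(3 + a + √5(1 + a)) = √5 − 2. -/
/-!
Completing the square in `r` factors `A_{a,1}` as
`(1 - a)/4 · (c₊ r - 2)(c₋ r - 2)` with `c± = 3 + a ± √5 (1 + a)`, so its roots are `2/c₊` and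
`2/c₋`, and `c₋ ≤ c₊` makes `2/c₊` the least positive one. Since `c₊ = 2 + (1 + √5)(1 + a)`
increases with `a`, the infimum over `[0,1)` is the value at `a = 1`, namely `1/(2 + √5) = √5 - 2`.
-/

open Set

namespace LiuPonnusamy

noncomputable section

def A (a r : ℝ) : ℝ := (1 - (2 - a ^ 2) * r) * (1 + a * r) - (1 - r) * (r + a)

def root (a : ℝ) : ℝ := 2 / (3 + a + √5 * (1 + a))

theorem A_eq_mul (a r : ℝ) :
    A a r = (1 - a) / 4 *
      (((3 + a + √5 * (1 + a)) * r - 2) * ((3 + a - √5 * (1 + a)) * r - 2)) := by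
  have h5 : √5 ^ 2 = 5 := Real.sq_sqrt (by norm_num)
  unfold A
  linear_combination ((1 - a) / 4 * (1 + a) ^ 2 * r ^ 2) * h5

theorem one_lt_sqrt_five : 1 < √5 := by
  rw [Real.lt_sqrt zero_le_one]; norm_num

theorem two_lt_denom {a : ℝ} (ha : -1 < a) : 2 < 3 + a + √5 * (1 + a) := by
  nlinarith [one_lt_sqrt_five]

theorem denom_pos {a : ℝ} (ha : -1 ≤ a) : 0 < 3 + a + √5 * (1 + a) := by
  nlinarith [one_lt_sqrt_five]

theorem root_mem_Ioo {a : ℝ} (ha : -1 < a) : root a ∈ Ioo 0 1 :=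
  ⟨div_pos two_pos (denom_pos ha.le), (div_lt_one (denom_pos ha.le)).2 (two_lt_denom ha)⟩

theorem A_root {a : ℝ} (ha : -1 ≤ a) : A a (root a) = 0 := by
  have hroot : (3 + a + √5 * (1 + a)) * root a - 2 = 0 := by
    rw [root, mul_div_cancel₀ _ (denom_pos ha).ne', sub_self]
  rw [A_eq_mul, hroot, zero_mul, mul_zero]

theorem root_le_of_A_eq_zero {a r : ℝ} (ha : -1 ≤ a) (ha1 : a ≠ 1) (hr : 0 < r)
    (h : A a r = 0) : root a ≤ r := by
  have hc : 0 < 3 + a + √5 * (1 + a) := denom_pos ha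
  have hc' : 0 ≤ √5 * (1 + a) * r :=
    mul_nonneg (mul_nonneg (Real.sqrt_nonneg 5) (by linarith)) hr.le
  rw [root, div_le_iff₀ hc]
  rw [A_eq_mul, mul_eq_zero, div_eq_zero_iff, mul_eq_zero] at h
  rcases h with (h | h) | h | h
  · exact absurd (sub_eq_zero.1 h).symm ha1
  · norm_num at h
  · linarith
  · nlinarith

theorem root_one : root 1 = √5 - 2 := by
  have h5 : √5 ^ 2 = 5 := Real.sq_sqrt (by norm_num)
  have hc : 3 + 1 + √5 * (1 + 1) ≠ 0 := (denom_pos (by norm_num)).ne'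
  rw [root, div_eq_iff hc]
  linear_combination -2 * h5

theorem root_one_le {a : ℝ} (ha : -1 ≤ a) (ha1 : a ≤ 1) : root 1 ≤ root a :=
  div_le_div_of_nonneg_left zero_le_two (denom_pos ha) (by gcongr)

theorem continuousOn_root : ContinuousOn root (Ici (-1)) :=
  ContinuousOn.div continuousOn_const (by fun_prop) fun _ ha => (denom_pos ha).ne'

theorem isGLB_root_image_Ico : IsGLB (root '' Ico 0 1) (√5 - 2) := by
  rw [← root_one]
  refine isGLB_of_mem_closure ?_ ?_
  · rintro _ ⟨a, ⟨ha0, ha1⟩, rfl⟩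
    exact root_one_le (by linarith) ha1.le
  · have hcl : closure (Ico (0 : ℝ) 1) = Icc 0 1 := closure_Ico zero_ne_one
    refine ContinuousOn.image_closure (continuousOn_root.mono ?_) ⟨1, by simp [hcl], rfl⟩
    rw [hcl]
    exact fun a ha => show -1 ≤ a by linarith [ha.1]

end

end LiuPonnusamy

open LiuPonnusamy in
/-- Remark after Theorem 5 of Liu–Ponnusamy, case `p = 1`: for every `a ∈ [0,1)` the
number `r = 2/(3 + a + √5(1 + a))` lies in `(0,1)`, satisfies `A_{a,1}(r) = 0` where
`A_{a,1}(r) = [1-(2-a²)r](1+ar) - (1-r)(r+a)`, is the minimum positive root of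
`A_{a,1}`, and `inf_{a ∈ [0,1)} 2/(3 + a + √5(1 + a)) = √5 - 2`. -/
theorem stmt_8 :
    (∀ a : ℝ, a ∈ Set.Ico (0 : ℝ) 1 →
      (2 / (3 + a + Real.sqrt 5 * (1 + a)) ∈ Set.Ioo (0 : ℝ) 1 ∧
       (1 - (2 - a ^ 2) * (2 / (3 + a + Real.sqrt 5 * (1 + a)))) *
           (1 + a * (2 / (3 + a + Real.sqrt 5 * (1 + a)))) -
         (1 - 2 / (3 + a + Real.sqrt 5 * (1 + a))) *
           (2 / (3 + a + Real.sqrt 5 * (1 + a)) + a) = 0 ∧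
       ∀ r' : ℝ, 0 < r' →
         (1 - (2 - a ^ 2) * r') * (1 + a * r') - (1 - r') * (r' + a) = 0 →
         2 / (3 + a + Real.sqrt 5 * (1 + a)) ≤ r')) ∧
    IsGLB ((fun a : ℝ => 2 / (3 + a + Real.sqrt 5 * (1 + a))) '' Set.Ico (0 : ℝ) 1)
      (Real.sqrt 5 - 2) := by
  refine ⟨fun a ⟨ha0, ha1⟩ => ?_, isGLB_root_image_Ico⟩
  have ha : -1 ≤ a := by linarith
  exact ⟨root_mem_Ioo (by linarith), A_root ha,
    fun r hr h => root_le_of_A_eq_zero ha ha1.ne hr h⟩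
end

section
/- For every a ∈ [0,1), the equation (1 − a³)r³ − (1 + 2a)r² − 2r + 1 = 0 has a unique root r_a in (0,1), and this root satisfies 1/3 < r_a < 1/(2 + a). -/
/-!
The cubic equals `(7 - 6a - a³)/27 > 0` at `1/3` and `(2a + 1)(a - 1)/(2 + a)³ < 0` at
`1/(2 + a)`, so it has a root between them; for `a ≥ 0` it is strictly decreasing on `[0, 1]`,
which gives uniqueness.
-/

open Set

def radiusCubic (a r : ℝ) : ℝ :=
  (1 - a ^ 3) * r ^ 3 - (1 + 2 * a) * r ^ 2 - 2 * r + 1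

lemma radiusCubic_one_third_pos {a : ℝ} (ha : a < 1) : 0 < radiusCubic a (1 / 3) := by
  have h : radiusCubic a (1 / 3) = (7 - 6 * a - a ^ 3) / 27 := by
    unfold radiusCubic; ring
  rw [h]
  nlinarith [sq_nonneg a, sq_nonneg (a - 1)]

lemma radiusCubic_inv_two_add_neg {a : ℝ} (ha₀ : -1 / 2 < a) (ha₁ : a < 1) :
    radiusCubic a (1 / (2 + a)) < 0 := by
  have h : radiusCubic a (1 / (2 + a)) = (2 * a + 1) * (a - 1) / (2 + a) ^ 3 := by
    have : 2 + a ≠ 0 := by linarith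
    unfold radiusCubic
    field_simp
    ring
  rw [h]
  exact div_neg_of_neg_of_pos (mul_neg_of_pos_of_neg (by linarith) (by linarith))
    (pow_pos (by linarith) 3)

lemma radiusCubic_strictAntiOn {a : ℝ} (ha : 0 ≤ a) :
    StrictAntiOn (radiusCubic a) (Icc 0 1) := by
  rintro x ⟨hx₀, hx₁⟩ y ⟨hy₀, hy₁⟩ hxy
  have hdiff : radiusCubic a x - radiusCubic a y =
      (y - x) * (2 + (1 + 2 * a) * (x + y) - (1 - a ^ 3) * (x ^ 2 + x * y + y ^ 2)) := by
    unfold radiusCubic; ring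
  -- `1 - a³ ≤ 1` and `x² + xy + y² ≤ x + y + 1 < 2 + (x + y)` on the unit square
  have hcoef : (1 - a ^ 3) * (x ^ 2 + x * y + y ^ 2) ≤ x ^ 2 + x * y + y ^ 2 := by
    have : 0 ≤ x ^ 2 + x * y + y ^ 2 := by positivity
    nlinarith [pow_nonneg ha 3]
  have hsq : x ^ 2 + x * y + y ^ 2 ≤ x + y + 1 := by
    nlinarith [mul_le_mul hx₁ hy₁ hy₀ zero_le_one]
  have hpos : 0 < 2 + (1 + 2 * a) * (x + y) - (1 - a ^ 3) * (x ^ 2 + x * y + y ^ 2) := by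
    nlinarith [mul_nonneg ha (add_nonneg hx₀ hy₀)]
  have := mul_pos (sub_pos.mpr hxy) hpos
  linarith

lemma exists_radiusCubic_eq_zero {a : ℝ} (ha₀ : -1 / 2 < a) (ha₁ : a < 1) :
    ∃ r ∈ Ioo (1 / 3) (1 / (2 + a)), radiusCubic a r = 0 := by
  have hlt : (1 : ℝ) / 3 < 1 / (2 + a) := by
    rw [div_lt_div_iff₀ (by norm_num) (by linarith)]; linarith
  have hcont : ContinuousOn (radiusCubic a) (Icc (1 / 3) (1 / (2 + a))) := by
    unfold radiusCubic; fun_prop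
  exact intermediate_value_Ioo' hlt.le hcont
    ⟨radiusCubic_inv_two_add_neg ha₀ ha₁, radiusCubic_one_third_pos ha₁⟩

/-- Remark after Theorem 5 of Liu–Ponnusamy, case `p = 2`: for every `a ∈ [0,1)` the
equation `(1-a³)r³ - (1+2a)r² - 2r + 1 = 0` has a unique root `r_a` in `(0,1)`, and
this root satisfies `1/3 < r_a < 1/(2+a)`. -/
theorem stmt_9 (a : ℝ) (ha : a ∈ Set.Ico (0 : ℝ) 1) :
    ∃ r : ℝ, r ∈ Set.Ioo (0 : ℝ) 1 ∧
      (1 - a ^ 3) * r ^ 3 - (1 + 2 * a) * r ^ 2 - 2 * r + 1 = 0 ∧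
      (∀ r' ∈ Set.Ioo (0 : ℝ) 1,
        (1 - a ^ 3) * r' ^ 3 - (1 + 2 * a) * r' ^ 2 - 2 * r' + 1 = 0 → r' = r) ∧
      1 / 3 < r ∧ r < 1 / (2 + a) := by
  obtain ⟨ha₀, ha₁⟩ := ha
  obtain ⟨r, ⟨hr₀, hr₁⟩, hr⟩ := exists_radiusCubic_eq_zero (by linarith) ha₁
  have hr_unit : r ∈ Ioo (0 : ℝ) 1 := by
    have : 1 / (2 + a) ≤ 1 / 2 := one_div_le_one_div_of_le two_pos (by linarith)
    constructor <;> linarith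
  refine ⟨r, hr_unit, hr, fun r' hr' hr'_root => ?_, hr₀, hr₁⟩
  exact (radiusCubic_strictAntiOn ha₀).injOn (Ioo_subset_Icc_self hr')
    (Ioo_subset_Icc_self hr_unit) (hr'_root.trans hr.symm)
end

section
/- Let p ∈ (0,2], let N ≥ 1 be an integer, and let r ∈ (0,1) satisfy 2(1+r)r^N > p(1−r)². Then there exists a ∈ (0,1) such that the Blaschke factor φ_a(z) = (a − z)/(1 − a z), which is analytic on 𝔻 with |φ_a| ≤ 1 and Taylor coefficients a₀ = a, a_k = (a² − 1)a^{k−1} for k ≥ 1, satisfies |φ_a(−r)|^p + Σ_{n=N}^∞ |a_n| r^n = ((r + a)/(1 + r a))^p + (1 − a²)a^{N−1} r^N/(1 − a r) > 1. (Hence the radius R_{N,p} in the refined Bohr inequality |f(z)|^p + Σ_{n=N}^∞ |a_n| r^n ≤ 1 is best possible.) -/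
/-!
Take `a` close to `1`. With `X = (r + a) / (1 + r a)`, the bound `log X ≥ 1 - X⁻¹` gives
`X ^ p ≥ 1 - (1 - a) p (1 - r) / (r + a)`, while the tail of the series is
`(1 - a) (1 + a) a ^ (N - 1) r ^ N / (1 - a r)`. After dividing out the common factor `1 - a`,
the sum exceeds `1` as soon as `p (1 - r) / (r + a) < (1 + a) a ^ (N - 1) r ^ N / (1 - a r)`; at
`a = 1` this is the hypothesis `p (1 - r)² < 2 (1 + r) r ^ N`, so by continuity it holds for
all `a < 1` close enough to `1`.
-/

open Filter Topology ComplexConjugate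

namespace Complex

lemma normSq_one_sub_conj_mul_sub_normSq_sub_s11 (a z : ℂ) :
    normSq (1 - conj a * z) - normSq (a - z) = (1 - normSq a) * (1 - normSq z) := by
  simp only [normSq_apply, sub_re, sub_im, mul_re, mul_im, conj_re, conj_im, one_re, one_im]
  ring

lemma norm_sub_div_one_sub_conj_mul_le_one {a z : ℂ} (ha : ‖a‖ ≤ 1) (hz : ‖z‖ ≤ 1) :
    ‖(a - z) / (1 - conj a * z)‖ ≤ 1 := by
  have hsq : normSq (a - z) ≤ normSq (1 - conj a * z) := by
    have hdiff := normSq_one_sub_conj_mul_sub_normSq_sub_s11 a z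
    have ha' : normSq a ≤ 1 := by rw [normSq_eq_norm_sq]; nlinarith [norm_nonneg a]
    have hz' : normSq z ≤ 1 := by rw [normSq_eq_norm_sq]; nlinarith [norm_nonneg z]
    nlinarith
  rw [normSq_eq_norm_sq, normSq_eq_norm_sq] at hsq
  rw [norm_div]
  exact div_le_one_of_le₀
    ((pow_le_pow_iff_left₀ (norm_nonneg _) (norm_nonneg _) two_ne_zero).mp hsq) (norm_nonneg _)

lemma norm_ofReal_sub_neg_div {a r : ℝ} (ha : 0 ≤ a) (hr : 0 ≤ r) :
    ‖((a : ℂ) - -(r : ℂ)) / (1 - (a : ℂ) * -(r : ℂ))‖ = (r + a) / (1 + r * a) := by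
  have hreal : ((a : ℂ) - -(r : ℂ)) / (1 - (a : ℂ) * -(r : ℂ))
      = ((r + a) / (1 + r * a) : ℝ) := by
    push_cast; ring
  rw [hreal, norm_real, Real.norm_of_nonneg (by positivity)]

end Complex

lemma tsum_mul_pow_add_mul_pow_add {a r : ℝ} (h : |a * r| < 1) (c : ℝ) (m k : ℕ) :
    ∑' n : ℕ, c * a ^ (m + n) * r ^ (k + n) = c * a ^ m * r ^ k / (1 - a * r) := by
  simp_rw [pow_add, show ∀ n : ℕ, c * (a ^ m * a ^ n) * (r ^ k * r ^ n)
    = c * a ^ m * r ^ k * (a * r) ^ n from fun n => by ring]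
  rw [tsum_mul_left, tsum_geometric_of_abs_lt_one h, div_eq_mul_inv]

lemma Real.one_add_mul_one_sub_inv_le_rpow {x p : ℝ} (hx : 0 < x) (hp : 0 ≤ p) :
    1 + p * (1 - x⁻¹) ≤ x ^ p := by
  calc 1 + p * (1 - x⁻¹) ≤ p * Real.log x + 1 := by
        nlinarith [Real.one_sub_inv_le_log_of_pos hx]
    _ ≤ Real.exp (p * Real.log x) := Real.add_one_le_exp _
    _ = x ^ p := by rw [Real.rpow_def_of_pos hx, mul_comm]

section Sharpness

variable {p r : ℝ} {N : ℕ}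

lemma eventually_lt_tail_of_lt (hr0 : 0 < r) (hr1 : r < 1)
    (hcond : p * (1 - r) ^ 2 < 2 * (1 + r) * r ^ N) :
    ∀ᶠ a in 𝓝 1, p * (1 - r) / (r + a) < (1 + a) * a ^ (N - 1) * r ^ N / (1 - a * r) := by
  refine ContinuousAt.eventually_lt (by fun_prop (disch := linarith))
    (by fun_prop (disch := linarith)) ?_
  simp only [one_pow, mul_one, one_mul]
  rw [div_lt_div_iff₀ (by linarith) (by linarith)]
  nlinarith

lemma one_lt_rpow_add_tail {a : ℝ} (hp : 0 ≤ p) (ha0 : 0 < a) (ha1 : a < 1) (hr0 : 0 < r)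
    (h : p * (1 - r) / (r + a) < (1 + a) * a ^ (N - 1) * r ^ N / (1 - a * r)) :
    1 < ((r + a) / (1 + r * a)) ^ p + (1 - a ^ 2) * a ^ (N - 1) * r ^ N / (1 - a * r) := by
  have hX := Real.one_add_mul_one_sub_inv_le_rpow
    (div_pos (by linarith : 0 < r + a) (by positivity : 0 < 1 + r * a)) hp
  have hgap : p * (1 - ((r + a) / (1 + r * a))⁻¹) = -((1 - a) * (p * (1 - r) / (r + a))) := by
    field_simp; ring
  have htail : (1 - a ^ 2) * a ^ (N - 1) * r ^ N / (1 - a * r)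
      = (1 - a) * ((1 + a) * a ^ (N - 1) * r ^ N / (1 - a * r)) := by ring
  have hscaled := mul_lt_mul_of_pos_left h (sub_pos.mpr ha1)
  linarith

end Sharpness

theorem stmt_11_general (p : ℝ) (hp0 : 0 < p) (N : ℕ)
    (r : ℝ) (hr0 : 0 < r) (hr1 : r < 1)
    (hcond : p * (1 - r) ^ 2 < 2 * (1 + r) * r ^ N) :
    ∃ a : ℝ, a ∈ Set.Ioo (0 : ℝ) 1 ∧
      (∀ z ∈ Metric.ball (0 : ℂ) 1, ‖((a : ℂ) - z) / (1 - (a : ℂ) * z)‖ ≤ 1) ∧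
      ‖((a : ℂ) - (-(r : ℂ))) / (1 - (a : ℂ) * (-(r : ℂ)))‖ ^ p +
          ∑' n : ℕ, (1 - a ^ 2) * a ^ (N - 1 + n) * r ^ (N + n)
        = ((r + a) / (1 + r * a)) ^ p +
            (1 - a ^ 2) * a ^ (N - 1) * r ^ N / (1 - a * r) ∧
      1 < ((r + a) / (1 + r * a)) ^ p +
            (1 - a ^ 2) * a ^ (N - 1) * r ^ N / (1 - a * r) := by
  obtain ⟨a, hlt, ha0, ha1⟩ := ((eventually_lt_tail_of_lt hr0 hr1 hcond).filter_mono
    nhdsWithin_le_nhds |>.and (Ioo_mem_nhdsLT (by norm_num : (0 : ℝ) < 1))).exists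
  refine ⟨a, ⟨ha0, ha1⟩, fun z hz => ?_, ?_, one_lt_rpow_add_tail hp0.le ha0 ha1 hr0 hlt⟩
  · have ha : ‖(a : ℂ)‖ ≤ 1 := by
      rw [Complex.norm_real, Real.norm_of_nonneg ha0.le]; exact ha1.le
    have hle := Complex.norm_sub_div_one_sub_conj_mul_le_one ha (mem_ball_zero_iff.mp hz).le
    rwa [Complex.conj_ofReal] at hle
  · have har : |a * r| < 1 := by
      rw [abs_of_pos (by positivity)]; nlinarith
    rw [Complex.norm_ofReal_sub_neg_div ha0.le hr0.le, tsum_mul_pow_add_mul_pow_add har]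

/-- Sharpness in Lemma 1 of Liu–Ponnusamy: for `p ∈ (0,2]`, integer `N ≥ 1`, and
`r ∈ (0,1)` with `2(1+r)r^N > p(1-r)²`, there is `a ∈ (0,1)` such that the Blaschke
factor `φ_a(z) = (a-z)/(1-az)` (with `|φ_a| ≤ 1` on `𝔻` and Taylor coefficients
`a₀ = a`, `a_k = (a²-1)a^{k-1}`) satisfies
`|φ_a(-r)|^p + Σ_{n≥N} |a_n| rⁿ = ((r+a)/(1+ra))^p + (1-a²)a^{N-1}r^N/(1-ar) > 1`. -/
theorem stmt_11 (p : ℝ) (hp0 : 0 < p) (hp2 : p ≤ 2) (N : ℕ) (hN : 1 ≤ N)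
    (r : ℝ) (hr0 : 0 < r) (hr1 : r < 1)
    (hcond : p * (1 - r) ^ 2 < 2 * (1 + r) * r ^ N) :
    ∃ a : ℝ, a ∈ Set.Ioo (0 : ℝ) 1 ∧
      (∀ z ∈ Metric.ball (0 : ℂ) 1, ‖((a : ℂ) - z) / (1 - (a : ℂ) * z)‖ ≤ 1) ∧
      ‖((a : ℂ) - (-(r : ℂ))) / (1 - (a : ℂ) * (-(r : ℂ)))‖ ^ p +
          ∑' n : ℕ, (1 - a ^ 2) * a ^ (N - 1 + n) * r ^ (N + n)
        = ((r + a) / (1 + r * a)) ^ p +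
            (1 - a ^ 2) * a ^ (N - 1) * r ^ N / (1 - a * r) ∧
      1 < ((r + a) / (1 + r * a)) ^ p +
            (1 - a ^ 2) * a ^ (N - 1) * r ^ N / (1 - a * r) :=
  stmt_11_general p hp0 N r hr0 hr1 hcond
end

section
/- Let a ∈ [0,1), p > 0, and r ∈ [0,1), and let φ_a(z) = (a − z)/(1 − a z) be the Blaschke factor with Taylor coefficients a₀ = a and a_k = (a² − 1)a^{k−1} for k ≥ 1. Then |φ_a(−r)|^p + Σ_{k=1}^∞ |a_k| r^k + (1/(1+a) + r/(1−r)) · Σ_{k=1}^∞ |a_k|² r^{2k} = ((r + a)/(1 + r a))^p + (1 − a²)·r/(1 − r) = 1 − A_{a,p}(r)/((1 − r)(1 + a r)^p). In particular this quantity exceeds 1 whenever A_{a,p}(r) < 0. -/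
/-! The point `φ_a(-r) = (r + a)/(1 + r a)` is real and nonnegative, and the two coefficient
series are geometric with ratios `a r` and `(a r)²`; what remains is rational-function algebra. -/

lemma tsum_mul_pow_mul_pow_succ {c a r : ℝ} (h : |a * r| < 1) :
    ∑' k : ℕ, c * a ^ k * r ^ (k + 1) = c * r / (1 - a * r) := by
  have hterm : ∀ k : ℕ, c * a ^ k * r ^ (k + 1) = c * r * (a * r) ^ k := fun k => by ring
  simp_rw [hterm]
  rw [tsum_mul_left, tsum_geometric_of_abs_lt_one h, div_eq_mul_inv]

lemma tsum_sq_mul_pow_mul_pow_two_mul_succ {c a r : ℝ} (h : |a * r| < 1) :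
    ∑' k : ℕ, (c * a ^ k) ^ 2 * r ^ (2 * (k + 1)) = c ^ 2 * r ^ 2 / (1 - (a * r) ^ 2) := by
  have hsq : |(a * r) ^ 2| < 1 := by
    rw [abs_pow]; exact pow_lt_one₀ (abs_nonneg _) h two_ne_zero
  have hterm : ∀ k : ℕ, (c * a ^ k) ^ 2 * r ^ (2 * (k + 1)) = c ^ 2 * r ^ 2 * ((a * r) ^ 2) ^ k :=
    fun k => by ring
  simp_rw [hterm]
  rw [tsum_mul_left, tsum_geometric_of_abs_lt_one hsq, div_eq_mul_inv]

lemma blaschke_neg_ofReal (a r : ℝ) :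
    ((a : ℂ) - -(r : ℂ)) / (1 - (a : ℂ) * -(r : ℂ)) = (((r + a) / (1 + r * a) : ℝ) : ℂ) := by
  push_cast
  congr 1 <;> ring

lemma norm_blaschke_neg_ofReal {a r : ℝ} (ha : 0 ≤ a) (hr : 0 ≤ r) :
    ‖((a : ℂ) - -(r : ℂ)) / (1 - (a : ℂ) * -(r : ℂ))‖ = (r + a) / (1 + r * a) := by
  rw [blaschke_neg_ofReal, Complex.norm_real, Real.norm_of_nonneg (by positivity)]

lemma blaschke_coeff_sums_eq {a r : ℝ} (ha : 1 + a ≠ 0) (hr : 1 - r ≠ 0)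
    (har : 1 - a * r ≠ 0) (har' : 1 + a * r ≠ 0) :
    (1 - a ^ 2) * r / (1 - a * r) +
        (1 / (1 + a) + r / (1 - r)) * ((1 - a ^ 2) ^ 2 * r ^ 2 / (1 - (a * r) ^ 2))
      = (1 - a ^ 2) * r / (1 - r) := by
  have hsq : 1 - a ^ 2 * r ^ 2 ≠ 0 := by
    rw [show 1 - a ^ 2 * r ^ 2 = (1 - a * r) * (1 + a * r) by ring]
    exact mul_ne_zero har har'
  rw [mul_pow]
  field_simp
  ring

lemma div_add_eq_one_sub_div {a r X Y : ℝ} (hX : X ≠ 0) (hr : 1 - r ≠ 0) :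
    Y / X + (1 - a ^ 2) * r / (1 - r)
      = 1 - ((1 - (2 - a ^ 2) * r) * X - (1 - r) * Y) / ((1 - r) * X) := by
  field_simp
  ring

theorem stmt_14_general (a p r : ℝ) (ha0 : 0 ≤ a) (ha1 : a < 1)
    (hr0 : 0 ≤ r) (hr1 : r < 1) (φ : ℂ → ℂ)
    (hφ : ∀ z : ℂ, φ z = ((a : ℂ) - z) / (1 - (a : ℂ) * z)) :
    ‖φ (-(r : ℂ))‖ ^ p + (∑' k : ℕ, (1 - a ^ 2) * a ^ k * r ^ (k + 1)) +
        (1 / (1 + a) + r / (1 - r)) *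
          ∑' k : ℕ, ((1 - a ^ 2) * a ^ k) ^ 2 * r ^ (2 * (k + 1))
      = ((r + a) / (1 + r * a)) ^ p + (1 - a ^ 2) * r / (1 - r) ∧
    ((r + a) / (1 + r * a)) ^ p + (1 - a ^ 2) * r / (1 - r)
      = 1 - ((1 - (2 - a ^ 2) * r) * (1 + a * r) ^ p - (1 - r) * (r + a) ^ p) /
          ((1 - r) * (1 + a * r) ^ p) ∧
    ((1 - (2 - a ^ 2) * r) * (1 + a * r) ^ p - (1 - r) * (r + a) ^ p < 0 →
      1 < ‖φ (-(r : ℂ))‖ ^ p + (∑' k : ℕ, (1 - a ^ 2) * a ^ k * r ^ (k + 1)) +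
        (1 / (1 + a) + r / (1 - r)) *
          ∑' k : ℕ, ((1 - a ^ 2) * a ^ k) ^ 2 * r ^ (2 * (k + 1))) := by
  have har : |a * r| < 1 := by
    rw [abs_of_nonneg (mul_nonneg ha0 hr0)]; nlinarith
  have hpos : 0 < 1 + a * r := by positivity
  have hX : 0 < (1 + a * r) ^ p := Real.rpow_pos_of_pos hpos p
  have hsum : ‖φ (-(r : ℂ))‖ ^ p + (∑' k : ℕ, (1 - a ^ 2) * a ^ k * r ^ (k + 1)) +
        (1 / (1 + a) + r / (1 - r)) *
          ∑' k : ℕ, ((1 - a ^ 2) * a ^ k) ^ 2 * r ^ (2 * (k + 1))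
      = ((r + a) / (1 + r * a)) ^ p + (1 - a ^ 2) * r / (1 - r) := by
    rw [hφ, norm_blaschke_neg_ofReal ha0 hr0, tsum_mul_pow_mul_pow_succ har,
      tsum_sq_mul_pow_mul_pow_two_mul_succ har, add_assoc,
      blaschke_coeff_sums_eq (by linarith) (by linarith) (by nlinarith) hpos.ne']
  have hA : ((r + a) / (1 + r * a)) ^ p + (1 - a ^ 2) * r / (1 - r)
      = 1 - ((1 - (2 - a ^ 2) * r) * (1 + a * r) ^ p - (1 - r) * (r + a) ^ p) /
          ((1 - r) * (1 + a * r) ^ p) := by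
    rw [mul_comm r a, Real.div_rpow (by positivity) hpos.le]
    exact div_add_eq_one_sub_div hX.ne' (by linarith)
  refine ⟨hsum, hA, fun hneg => ?_⟩
  rw [hsum, hA, lt_sub_iff_add_lt, add_lt_iff_neg_left]
  exact div_neg_of_neg_of_pos hneg (mul_pos (by linarith) hX)

/-- Sharpness computation in Lemma 3 of Liu–Ponnusamy: for the Blaschke factor
`φ_a(z) = (a-z)/(1-az)` with coefficients `a₀ = a`, `a_k = (a²-1)a^{k-1}` (`k ≥ 1`),
`a ∈ [0,1)`, `p > 0`, `r ∈ [0,1)`: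
`|φ_a(-r)|^p + Σ_{k≥1} |a_k| r^k + (1/(1+a) + r/(1-r)) Σ_{k≥1} |a_k|² r^{2k}
  = ((r+a)/(1+ra))^p + (1-a²)r/(1-r) = 1 - A_{a,p}(r)/((1-r)(1+ar)^p)`,
and this quantity exceeds `1` whenever `A_{a,p}(r) < 0`. -/
theorem stmt_14 (a p r : ℝ) (ha0 : 0 ≤ a) (ha1 : a < 1) (hp : 0 < p)
    (hr0 : 0 ≤ r) (hr1 : r < 1) (φ : ℂ → ℂ)
    (hφ : ∀ z : ℂ, φ z = ((a : ℂ) - z) / (1 - (a : ℂ) * z)) :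
    ‖φ (-(r : ℂ))‖ ^ p + (∑' k : ℕ, (1 - a ^ 2) * a ^ k * r ^ (k + 1)) +
        (1 / (1 + a) + r / (1 - r)) *
          ∑' k : ℕ, ((1 - a ^ 2) * a ^ k) ^ 2 * r ^ (2 * (k + 1))
      = ((r + a) / (1 + r * a)) ^ p + (1 - a ^ 2) * r / (1 - r) ∧
    ((r + a) / (1 + r * a)) ^ p + (1 - a ^ 2) * r / (1 - r)
      = 1 - ((1 - (2 - a ^ 2) * r) * (1 + a * r) ^ p - (1 - r) * (r + a) ^ p) /
          ((1 - r) * (1 + a * r) ^ p) ∧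
    ((1 - (2 - a ^ 2) * r) * (1 + a * r) ^ p - (1 - r) * (r + a) ^ p < 0 →
      1 < ‖φ (-(r : ℂ))‖ ^ p + (∑' k : ℕ, (1 - a ^ 2) * a ^ k * r ^ (k + 1)) +
        (1 / (1 + a) + r / (1 - r)) *
          ∑' k : ℕ, ((1 - a ^ 2) * a ^ k) ^ 2 * r ^ (2 * (k + 1))) :=
  stmt_14_general a p r ha0 ha1 hr0 hr1 φ hφ
end

section
/- Let p > 1 and a ∈ [0,1]. Then the function Φ(r) = (1 + r)² (r + a)^{p−1}/(1 + r a)^{p+1} is nondecreasing on [0,1); in particular Φ(r) ≥ Φ(0) = a^{p−1} for all r ∈ [0,1). -/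
/-!
Writing `Φ(r) = ((1 + r) / (1 + r a))² · ((r + a) / (1 + r a))^(p - 1)`, both Möbius factors are
nondecreasing and nonnegative in `r ≥ 0` when `0 ≤ a ≤ 1`: their cross-multiplied differences are
`(y - x)(1 - a)` and `(y - x)(1 - a²)`. Since `p - 1 ≥ 0`, so is `Φ`.
-/

open Set

lemma monotoneOn_one_add_div_one_add_mul {a : ℝ} (ha₀ : 0 ≤ a) (ha₁ : a ≤ 1) :
    MonotoneOn (fun r : ℝ => (1 + r) / (1 + r * a)) (Ici 0) := by
  intro x (hx : 0 ≤ x) y (hy : 0 ≤ y) hxy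
  rw [div_le_div_iff₀ (by positivity) (by positivity)]
  nlinarith [mul_nonneg (sub_nonneg.2 hxy) (sub_nonneg.2 ha₁)]

lemma monotoneOn_add_div_one_add_mul {a : ℝ} (ha₀ : 0 ≤ a) (ha₁ : a ≤ 1) :
    MonotoneOn (fun r : ℝ => (r + a) / (1 + r * a)) (Ici 0) := by
  intro x (hx : 0 ≤ x) y (hy : 0 ≤ y) hxy
  rw [div_le_div_iff₀ (by positivity) (by positivity)]
  have ha : 0 ≤ 1 - a ^ 2 := by nlinarith
  nlinarith [mul_nonneg (sub_nonneg.2 hxy) ha]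

lemma one_add_sq_mul_rpow_div_rpow_eq (p : ℝ) {a r : ℝ} (ha : 0 ≤ a) (hr : 0 ≤ r) :
    (1 + r) ^ 2 * (r + a) ^ (p - 1) / (1 + r * a) ^ (p + 1) =
      ((1 + r) / (1 + r * a)) ^ 2 * ((r + a) / (1 + r * a)) ^ (p - 1) := by
  have hden : 0 < 1 + r * a := by positivity
  have hsplit : (1 + r * a) ^ (p + 1) = (1 + r * a) ^ 2 * (1 + r * a) ^ (p - 1) := by
    rw [← Real.rpow_natCast, ← Real.rpow_add hden]
    congr 1
    push_cast
    ring
  rw [div_pow, Real.div_rpow (by positivity) hden.le, div_mul_div_comm, hsplit]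

theorem monotoneOn_one_add_sq_mul_rpow_div_rpow {p a : ℝ} (hp : 1 ≤ p) (ha₀ : 0 ≤ a)
    (ha₁ : a ≤ 1) :
    MonotoneOn (fun r : ℝ => (1 + r) ^ 2 * (r + a) ^ (p - 1) / (1 + r * a) ^ (p + 1))
      (Ici 0) := by
  intro x (hx : 0 ≤ x) y (hy : 0 ≤ y) hxy
  simp only [one_add_sq_mul_rpow_div_rpow_eq p ha₀ hx, one_add_sq_mul_rpow_div_rpow_eq p ha₀ hy]
  have hp' : 0 ≤ p - 1 := by linarith
  gcongr ?_ ^ 2 * ?_ ^ (p - 1)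
  · exact monotoneOn_one_add_div_one_add_mul ha₀ ha₁ hx hy hxy
  · exact monotoneOn_add_div_one_add_mul ha₀ ha₁ hx hy hxy

/-- Auxiliary monotonicity lemma of Liu–Ponnusamy: for `p > 1` and `a ∈ [0,1]`, the
function `Φ(r) = (1+r)² (r+a)^(p-1) / (1+ra)^(p+1)` is nondecreasing on `[0,1)`;
in particular `Φ(r) ≥ Φ(0) = a^(p-1)` for all `r ∈ [0,1)`. -/
theorem stmt_16 (p a : ℝ) (hp : 1 < p) (ha : a ∈ Set.Icc (0 : ℝ) 1) :
    MonotoneOn (fun r : ℝ => (1 + r) ^ 2 * (r + a) ^ (p - 1) / (1 + r * a) ^ (p + 1))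
      (Set.Ico (0 : ℝ) 1) ∧
    ∀ r ∈ Set.Ico (0 : ℝ) 1,
      a ^ (p - 1) ≤ (1 + r) ^ 2 * (r + a) ^ (p - 1) / (1 + r * a) ^ (p + 1) := by
  have hmono := monotoneOn_one_add_sq_mul_rpow_div_rpow hp.le ha.1 ha.2
  refine ⟨hmono.mono Ico_subset_Ici_self, fun r hr => ?_⟩
  simpa using hmono self_mem_Ici hr.1 hr.1
end

section
/- Let p ∈ (0,2], let N ≥ 1 be an integer, let a ∈ [0,1], and let r ∈ [0,1) satisfy 2(1+r)r^N ≤ p(1−r)². Then ((r + a)/(1 + r a))^p + (1 − a²) r^N/(1 − r) ≤ 1. -/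
/-!
Write `A = (r + a)/(1 + r a)`. Bernoulli's inequality with exponent `p/2 ∈ (0, 1]` gives
`A^p = (A²)^(p/2) ≤ 1 - (p/2)(1 - A²)`, so it suffices to bound the second term by
`(p/2)(1 - A²)`. By the identity `1 - A² = (1 - r²)(1 - a²)/(1 + r a)²` and
`(1 + r a)² ≤ (1 + r)²`, this reduces to `r^N/(1 - r) ≤ p(1 - r)/(2(1 + r))`, which is the
hypothesis on `r`.
-/

open Real

lemma rpow_le_one_sub_mul_one_sub_sq {t p : ℝ} (ht : 0 ≤ t) (hp0 : 0 ≤ p) (hp2 : p ≤ 2) :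
    t ^ p ≤ 1 - p / 2 * (1 - t ^ 2) := by
  have hsq : t ^ p = (1 + (t ^ 2 - 1)) ^ (p / 2) := by
    rw [add_sub_cancel, ← rpow_natCast, ← rpow_mul ht]
    ring_nf
  rw [hsq]
  linarith [rpow_one_add_le_one_add_mul_self (s := t ^ 2 - 1) (by nlinarith)
    (by linarith : 0 ≤ p / 2) (by linarith)]

lemma one_sub_div_one_add_mul_sq {K : Type*} [Field K] {r a : K} (h : 1 + r * a ≠ 0) :
    1 - ((r + a) / (1 + r * a)) ^ 2 = (1 - r ^ 2) * (1 - a ^ 2) / (1 + r * a) ^ 2 := by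
  field_simp
  ring

lemma div_one_sub_le_of_two_mul_one_add_mul_le {p r a s : ℝ} (hp : 0 ≤ p) (ha0 : 0 ≤ a)
    (ha1 : a ≤ 1) (hr0 : 0 ≤ r) (hr1 : r < 1) (h : 2 * (1 + r) * s ≤ p * (1 - r) ^ 2) :
    s / (1 - r) ≤ p / 2 * ((1 - r ^ 2) / (1 + r * a) ^ 2) := by
  have hsub : 0 < 1 - r := by linarith
  have hra : r * a ≤ r := mul_le_of_le_one_right hr0 ha1
  calc s / (1 - r) ≤ p / 2 * ((1 - r ^ 2) / (1 + r) ^ 2) := by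
        rw [div_le_iff₀ hsub]
        have hrhs : p / 2 * ((1 - r ^ 2) / (1 + r) ^ 2) * (1 - r)
            = p * (1 - r) ^ 2 / (2 * (1 + r)) := by
          field_simp
          ring
        rw [hrhs, le_div_iff₀ (by positivity)]
        linarith
    _ ≤ p / 2 * ((1 - r ^ 2) / (1 + r * a) ^ 2) := by
        gcongr
        nlinarith

theorem stmt_18_general (p : ℝ) (hp0 : 0 < p) (hp2 : p ≤ 2) (N : ℕ)
    (a : ℝ) (ha : a ∈ Set.Icc (0 : ℝ) 1) (r : ℝ) (hr0 : 0 ≤ r) (hr1 : r < 1)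
    (hcond : 2 * (1 + r) * r ^ N ≤ p * (1 - r) ^ 2) :
    ((r + a) / (1 + r * a)) ^ p + (1 - a ^ 2) * r ^ N / (1 - r) ≤ 1 := by
  obtain ⟨ha0, ha1⟩ := ha
  have hden : 0 < 1 + r * a := by positivity
  have hbernoulli := rpow_le_one_sub_mul_one_sub_sq
    (div_nonneg (add_nonneg hr0 ha0) hden.le) hp0.le hp2
  rw [one_sub_div_one_add_mul_sq hden.ne'] at hbernoulli
  have hterm : (1 - a ^ 2) * r ^ N / (1 - r)
      ≤ p / 2 * ((1 - r ^ 2) * (1 - a ^ 2) / (1 + r * a) ^ 2) := by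
    have hpos : 0 ≤ 1 - a ^ 2 := by nlinarith
    calc (1 - a ^ 2) * r ^ N / (1 - r) = (1 - a ^ 2) * (r ^ N / (1 - r)) := mul_div_assoc ..
      _ ≤ (1 - a ^ 2) * (p / 2 * ((1 - r ^ 2) / (1 + r * a) ^ 2)) := by
        gcongr
        exact div_one_sub_le_of_two_mul_one_add_mul_le hp0.le ha0 ha1 hr0 hr1 hcond
      _ = p / 2 * ((1 - r ^ 2) * (1 - a ^ 2) / (1 + r * a) ^ 2) := by ring
  linarith

/-- The scalar core of Lemma 1 of Liu–Ponnusamy: for `p ∈ (0,2]`, an integer `N ≥ 1`,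
`a ∈ [0,1]` and `r ∈ [0,1)` with `2(1+r)r^N ≤ p(1-r)²`, one has
`((r+a)/(1+ra))^p + (1-a²) r^N/(1-r) ≤ 1`. -/
theorem stmt_18 (p : ℝ) (hp0 : 0 < p) (hp2 : p ≤ 2) (N : ℕ) (hN : 1 ≤ N)
    (a : ℝ) (ha : a ∈ Set.Icc (0 : ℝ) 1) (r : ℝ) (hr0 : 0 ≤ r) (hr1 : r < 1)
    (hcond : 2 * (1 + r) * r ^ N ≤ p * (1 - r) ^ 2) :
    ((r + a) / (1 + r * a)) ^ p + (1 - a ^ 2) * r ^ N / (1 - r) ≤ 1 :=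
  stmt_18_general p hp0 hp2 N a ha r hr0 hr1 hcond
end
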